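/- arXiv:2603.21645 — 3 statements merged into one kernel-verified Lean document; each statement's English description precedes it below -/
import Mathlib

section
/- There is an absolute constant C such that for all integers n ≥ 1 and 0 ≤ c < n there exists a DFA over the alphabet {0,1}×{0,1} with at most C·n² states accepting exactly the language L_{n,c} = { x×y : x, y are equal-length valid Fibonacci representations and [y] = n·[x] + c }. -/
/-- The Fibonacci (Zeckendorf) value of a binary word written msd-first:
`[x₁⋯x_ℓ] = Σ_j x_j · F_{ℓ−j+2}`. -/
def fibVal : List Bool → ℕ
  | [] => 0
  | a :: rest => (if a then Nat.fib (rest.length + 2) else 0) + fibVal rest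

/-- A binary word is a valid Fibonacci representation if it has no factor `11`. -/
def ValidFib (w : List Bool) : Prop :=
  w.Chain' (fun a b => a = false ∨ b = false)

/-!
Read `x × y` most significant digit first. Appending a bit `a` to a word `u` sends
`([u], [u]')` to `([u] + [u]' + a, [u] + a)`, where `[u]'` is the value of `u` with every weight
`F_k` lowered to `F_{k-1}`. So an automaton can follow `D = [y] - n[x]` and `D' = [y]' - n[x]'`
by an affine recursion, together with the last letter to forbid the factor `11`; it accepts
when `D = c`. It has `O(n²)` states because `|D|, |D'| ≤ 2n + 1` along every prefix `p` of an
accepted word. Indeed, if `s` is the rest of the word (length `m`), the equation for the whole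
word gives `F_{m+1} D + F_m D' = c - D(s) = O(n F_{m+2})`, while the estimate
`|F_{ℓ+2} [u]' - F_{ℓ+1} [u]| ≤ F_{ℓ+1}` for valid `u` of length `ℓ` gives
`F_{ℓ+2} D' - F_{ℓ+1} D = O(n F_{ℓ+1})`; solving this 2 × 2 system bounds `D` and `D'`.
-/

def shiftedFibVal : List Bool → ℕ
  | [] => 0
  | a :: rest => (if a then Nat.fib (rest.length + 1) else 0) + shiftedFibVal rest

theorem fibVal_append_singleton (p : List Bool) (a : Bool) :
    fibVal (p ++ [a]) = fibVal p + shiftedFibVal p + a.toNat := by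
  induction p with
  | nil => cases a <;> simp [fibVal, shiftedFibVal]
  | cons b t ih =>
    simp only [List.cons_append, fibVal, shiftedFibVal, ih, List.length_append,
      List.length_singleton, Nat.fib_add_two]
    split_ifs <;> ring

theorem shiftedFibVal_append_singleton (p : List Bool) (a : Bool) :
    shiftedFibVal (p ++ [a]) = fibVal p + a.toNat := by
  induction p with
  | nil => cases a <;> simp [fibVal, shiftedFibVal]
  | cons b t ih =>
    simp only [List.cons_append, fibVal, shiftedFibVal, ih, List.length_append,
      List.length_singleton]
    split_ifs <;> ring

theorem fibVal_append (p s : List Bool) :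
    fibVal (p ++ s) =
      Nat.fib (s.length + 1) * fibVal p + Nat.fib s.length * shiftedFibVal p + fibVal s := by
  induction p with
  | nil => simp [fibVal, shiftedFibVal]
  | cons b t ih =>
    have hfib : Nat.fib (t.length + s.length + 2) =
        Nat.fib s.length * Nat.fib (t.length + 1) + Nat.fib (s.length + 1) * Nat.fib (t.length + 2) :=
      by rw [show t.length + s.length + 2 = s.length + (t.length + 1) + 1 by omega, Nat.fib_add]
    simp only [List.cons_append, fibVal, shiftedFibVal, ih, List.length_append, hfib]
    split_ifs <;> ring

theorem validFib_iff {l : List Bool} :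
    ValidFib l ↔ l.IsChain (fun a b => a = false ∨ b = false) := Iff.rfl

theorem validFib_append_singleton {l : List Bool} {b : Bool} :
    ValidFib (l ++ [b]) ↔ ValidFib l ∧ (l.getLast?.getD false && b) = false := by
  simp only [validFib_iff, List.isChain_append]
  cases l.getLast? with
  | none => simp
  | some a => cases a <;> cases b <;> simp

theorem fibVal_lt_fib : ∀ {s : List Bool}, ValidFib s → fibVal s < Nat.fib (s.length + 2)
  | [], _ => by simp [fibVal]
  | [true], _ => by simp [fibVal, Nat.fib_add_two]
  | false :: t, h => by
    have ih : fibVal t < Nat.fib (t.length + 2) :=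
      fibVal_lt_fib (validFib_iff.2 (validFib_iff.1 h).tail)
    have := Nat.fib_le_fib_succ (n := t.length + 2)
    simp only [fibVal, List.length_cons, Bool.false_eq_true, if_false, zero_add]
    exact ih.trans_le this
  | true :: true :: _, h => by simp [validFib_iff] at h
  | true :: false :: t, h => by
    have ih : fibVal t < Nat.fib (t.length + 2) :=
      fibVal_lt_fib (validFib_iff.2 (validFib_iff.1 h).tail.tail)
    simp only [fibVal, List.length_cons, Bool.false_eq_true, if_false, if_true, zero_add]
    rw [show t.length + 1 + 1 + 2 = t.length + 2 + 2 by omega, Nat.fib_add_two (n := t.length + 2),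
      show t.length + 1 + 2 = t.length + 2 + 1 by omega]
    omega

def fibDefect (p : List Bool) : ℤ :=
  Nat.fib (p.length + 2) * shiftedFibVal p - Nat.fib (p.length + 1) * fibVal p

theorem fibDefect_append_singleton (p : List Bool) (a : Bool) :
    fibDefect (p ++ [a]) = a.toNat * Nat.fib (p.length + 1) - fibDefect p := by
  have hfib : Nat.fib (p.length + 1 + 2) = Nat.fib (p.length + 1) + Nat.fib (p.length + 2) :=
    Nat.fib_add_two
  simp only [fibDefect, fibVal_append_singleton, shiftedFibVal_append_singleton,
    List.length_append, List.length_singleton, hfib]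
  push_cast
  ring

/-- The bound is sharper after a final `0`; this is what keeps it valid when a `1` follows. -/
theorem abs_fibDefect_le {p : List Bool} (hp : ValidFib p) :
    |fibDefect p| ≤ Nat.fib (p.length + (p.getLast?.getD false).toNat) := by
  induction p using List.reverseRecOn with
  | nil => simp [fibDefect, fibVal, shiftedFibVal]
  | append_singleton p a ih =>
    obtain ⟨hp, hlast⟩ := validFib_append_singleton.1 hp
    have ih := ih hp
    rw [fibDefect_append_singleton]
    simp only [List.length_append, List.length_singleton, List.getLast?_append,
      List.getLast?_singleton, Option.some_or, Option.getD_some]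
    cases a with
    | false =>
      have := Nat.fib_mono (show p.length + (p.getLast?.getD false).toNat ≤ p.length + 1 by
        cases p.getLast?.getD false <;> simp)
      simpa using ih.trans (by exact_mod_cast this)
    | true =>
      simp only [Bool.and_true] at hlast
      simp only [hlast, Bool.toNat_false, add_zero] at ih
      have hfib : Nat.fib (p.length + 1 + 1) = Nat.fib p.length + Nat.fib (p.length + 1) :=
        Nat.fib_add_two
      simp only [Bool.toNat_true, Nat.cast_one, one_mul, hfib, Nat.cast_add]
      calc |(Nat.fib (p.length + 1) : ℤ) - fibDefect p|
          ≤ |(Nat.fib (p.length + 1) : ℤ)| + |fibDefect p| := abs_sub _ _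
        _ ≤ _ := by rw [Nat.abs_cast]; linarith

section Difference

variable (n : ℕ)

def fibDiff (w : List (Bool × Bool)) : ℤ :=
  fibVal (w.map Prod.snd) - n * fibVal (w.map Prod.fst)

def shiftedFibDiff (w : List (Bool × Bool)) : ℤ :=
  shiftedFibVal (w.map Prod.snd) - n * shiftedFibVal (w.map Prod.fst)

def letterDiff (ab : Bool × Bool) : ℤ :=
  ab.2.toNat - n * ab.1.toNat

theorem fibDiff_append_singleton (w : List (Bool × Bool)) (ab : Bool × Bool) :
    fibDiff n (w ++ [ab]) = fibDiff n w + shiftedFibDiff n w + letterDiff n ab := by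
  simp only [fibDiff, shiftedFibDiff, letterDiff, List.map_append, List.map_singleton,
    fibVal_append_singleton]
  push_cast
  ring

theorem shiftedFibDiff_append_singleton (w : List (Bool × Bool)) (ab : Bool × Bool) :
    shiftedFibDiff n (w ++ [ab]) = fibDiff n w + letterDiff n ab := by
  simp only [fibDiff, shiftedFibDiff, letterDiff, List.map_append, List.map_singleton,
    shiftedFibVal_append_singleton]
  push_cast
  ring

theorem fibDiff_append (p s : List (Bool × Bool)) :
    fibDiff n (p ++ s) = Nat.fib (s.length + 1) * fibDiff n p +
      Nat.fib s.length * shiftedFibDiff n p + fibDiff n s := by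
  simp only [fibDiff, shiftedFibDiff, List.map_append, fibVal_append, List.length_map]
  push_cast
  ring

theorem abs_fibDefect_fibDiff_le {w : List (Bool × Bool)} (hx : ValidFib (w.map Prod.fst))
    (hy : ValidFib (w.map Prod.snd)) :
    |Nat.fib (w.length + 2) * shiftedFibDiff n w - Nat.fib (w.length + 1) * fibDiff n w|
      ≤ (n + 1) * Nat.fib (w.length + 1) := by
  have hdefect : ∀ u : List Bool, ValidFib u → |fibDefect u| ≤ Nat.fib (u.length + 1) :=
    fun u hu => (abs_fibDefect_le hu).trans <| by
      exact_mod_cast Nat.fib_mono (by cases u.getLast?.getD false <;> simp)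
  have hx := hdefect _ hx
  have hy := hdefect _ hy
  rw [List.length_map] at hx hy
  calc _ = |fibDefect (w.map Prod.snd) - n * fibDefect (w.map Prod.fst)| := by
        simp only [fibDefect, fibDiff, shiftedFibDiff, List.length_map]; ring_nf
    _ ≤ |fibDefect (w.map Prod.snd)| + n * |fibDefect (w.map Prod.fst)| := by
        simpa [abs_mul] using abs_sub _ (n * fibDefect (w.map Prod.fst))
    _ ≤ _ := by nlinarith

theorem abs_sub_fibDiff_le (hn : 1 ≤ n) {c : ℤ} (hc : |c| ≤ n) {s : List (Bool × Bool)}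
    (hx : ValidFib (s.map Prod.fst)) (hy : ValidFib (s.map Prod.snd)) :
    |c - fibDiff n s| ≤ n * Nat.fib (s.length + 2) := by
  have hx := fibVal_lt_fib hx
  have hy := fibVal_lt_fib hy
  rw [List.length_map] at hx hy
  rw [abs_le] at hc ⊢
  unfold fibDiff
  constructor <;> nlinarith

end Difference

theorem mul_abs_le_of_cramer {R : Type*} [CommRing R] [LinearOrder R] [IsStrictOrderedRing R]
    {a b e f x y r s : R} (ha : 0 ≤ a) (hb : 0 ≤ b) (he : 0 ≤ e) (hf : 0 ≤ f)
    (hr : a * x + b * y = r) (hs : f * y - e * x = s) :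
    (a * f + b * e) * |x| ≤ f * |r| + b * |s| ∧ (a * f + b * e) * |y| ≤ a * |s| + e * |r| := by
  have hΔ : 0 ≤ a * f + b * e := by positivity
  constructor
  · calc (a * f + b * e) * |x| = |f * r - b * s| := by
          rw [← abs_of_nonneg hΔ, ← abs_mul, ← hr, ← hs]; ring_nf
      _ ≤ |f * r| + |b * s| := abs_sub _ _
      _ = f * |r| + b * |s| := by rw [abs_mul, abs_mul, abs_of_nonneg hf, abs_of_nonneg hb]
  · calc (a * f + b * e) * |y| = |a * s + e * r| := by
          rw [← abs_of_nonneg hΔ, ← abs_mul, ← hr, ← hs]; ring_nf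
      _ ≤ |a * s| + |e * r| := abs_add_le _ _
      _ = a * |s| + e * |r| := by rw [abs_mul, abs_mul, abs_of_nonneg ha, abs_of_nonneg he]

theorem abs_fibDiff_le_of_isPrefix {n : ℕ} (hn : 1 ≤ n) {c : ℤ} (hc : |c| ≤ n)
    {p w : List (Bool × Bool)} (hp : p <+: w) (hx : ValidFib (w.map Prod.fst))
    (hy : ValidFib (w.map Prod.snd)) (hw : fibDiff n w = c) :
    |fibDiff n p| ≤ 2 * n + 1 ∧ |shiftedFibDiff n p| ≤ 2 * n + 1 := by
  obtain ⟨s, rfl⟩ := hp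
  rw [List.map_append] at hx hy
  have hr := abs_sub_fibDiff_le n hn hc (List.IsChain.right_of_append hx)
    (List.IsChain.right_of_append hy)
  have hs := abs_fibDefect_fibDiff_le n (List.IsChain.left_of_append hx)
    (List.IsChain.left_of_append hy)
  rw [fibDiff_append] at hw
  have hab : (Nat.fib s.length : ℤ) ≤ Nat.fib (s.length + 1) := by
    exact_mod_cast Nat.fib_le_fib_succ
  have hef : (Nat.fib (p.length + 1) : ℤ) ≤ Nat.fib (p.length + 2) := by
    exact_mod_cast Nat.fib_le_fib_succ
  have hfib : (Nat.fib (s.length + 2) : ℤ) = Nat.fib s.length + Nat.fib (s.length + 1) := by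
    exact_mod_cast Nat.fib_add_two
  have ha : (0 : ℤ) < Nat.fib (s.length + 1) := by exact_mod_cast Nat.fib_pos.2 (Nat.succ_pos _)
  have hf : (0 : ℤ) < Nat.fib (p.length + 2) := by exact_mod_cast Nat.fib_pos.2 (Nat.succ_pos _)
  rw [hfib] at hr
  set a : ℤ := (Nat.fib (s.length + 1) : ℤ)
  set b : ℤ := (Nat.fib s.length : ℤ)
  set e : ℤ := (Nat.fib (p.length + 1) : ℤ)
  set f : ℤ := (Nat.fib (p.length + 2) : ℤ)
  obtain ⟨hx, hy⟩ := mul_abs_le_of_cramer (e := e) (f := f) ha.le (by positivity) (by positivity)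
    hf.le (eq_sub_of_add_eq hw) rfl
  have hb : 0 ≤ b := by positivity
  have he : 0 ≤ e := by positivity
  have hΔ : 0 < a * f + b * e := by positivity
  constructor
  · refine le_of_mul_le_mul_left ?_ hΔ
    calc (a * f + b * e) * |fibDiff n p|
        ≤ f * (n * (b + a)) + b * ((n + 1) * e) := by
          grw [hx, hr, hs]
      _ ≤ (a * f + b * e) * (2 * n + 1) := by
          nlinarith [mul_le_mul_of_nonneg_left hab (by positivity : (0 : ℤ) ≤ f * n),
            mul_nonneg hb he, mul_nonneg ha.le hf.le]
  · refine le_of_mul_le_mul_left ?_ hΔ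
    calc (a * f + b * e) * |shiftedFibDiff n p|
        ≤ a * ((n + 1) * e) + e * (n * (b + a)) := by
          grw [hy, hr, hs]
      _ ≤ (a * f + b * e) * (2 * n + 1) := by
          nlinarith [mul_le_mul_of_nonneg_left hef (by positivity : (0 : ℤ) ≤ a * (2 * n + 1)),
            mul_nonneg hb he]

def lastLetter (w : List (Bool × Bool)) : Bool × Bool :=
  w.getLast?.getD (false, false)

theorem getLast?_getD_map_fst (w : List (Bool × Bool)) :
    (w.map Prod.fst).getLast?.getD false = (lastLetter w).1 := by
  rw [List.getLast?_map, lastLetter]; cases w.getLast? <;> rfl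

theorem getLast?_getD_map_snd (w : List (Bool × Bool)) :
    (w.map Prod.snd).getLast?.getD false = (lastLetter w).2 := by
  rw [List.getLast?_map, lastLetter]; cases w.getLast? <;> rfl

abbrev MulState (B : ℕ) := Option (Set.Icc (-B : ℤ) B × Set.Icc (-B : ℤ) B × Bool × Bool)

/-- A live state holds `fibDiff n w`, `shiftedFibDiff n w` and `lastLetter w` of the word `w`
read so far; it dies when the factor `11` appears or a difference leaves `[-B, B]`. -/
def mulDFA (n : ℕ) (c : ℤ) (B : ℕ) : DFA (Bool × Bool) (MulState B) where
  step
    | some (d, d', a, b), (x, y) =>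
      if a && x || b && y then none
      else if h : |d + d' + letterDiff n (x, y)| ≤ B ∧ |d + letterDiff n (x, y)| ≤ B then
        some (⟨_, abs_le.1 h.1⟩, ⟨_, abs_le.1 h.2⟩, x, y)
      else none
    | none, _ => none
  start := some (⟨0, by simp⟩, ⟨0, by simp⟩, false, false)
  accept := {q | ∃ r, q = some r ∧ (r.1 : ℤ) = c}

theorem card_mulState (B : ℕ) : Fintype.card (MulState B) = 4 * (2 * B + 1) ^ 2 + 1 := by
  simp only [Fintype.card_option, Fintype.card_prod, Fintype.card_bool, Fintype.card_ofFinset,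
    Int.card_Icc, sub_neg_eq_add, show ((B : ℤ) + 1 + B).toNat = 2 * B + 1 by omega]
  ring

section MulDFA

variable {n : ℕ} {c : ℤ} {B : ℕ}

theorem mulDFA_eval_eq_some {w : List (Bool × Bool)} {q} (h : (mulDFA n c B).eval w = some q) :
    (q.1 : ℤ) = fibDiff n w ∧ (q.2.1 : ℤ) = shiftedFibDiff n w ∧ q.2.2 = lastLetter w ∧
      ValidFib (w.map Prod.fst) ∧ ValidFib (w.map Prod.snd) := by
  induction w using List.reverseRecOn generalizing q with
  | nil =>
    obtain rfl : q = (⟨0, _⟩, ⟨0, _⟩, false, false) := (Option.some_injective _ h).symm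
    simp [fibDiff, shiftedFibDiff, fibVal, shiftedFibVal, lastLetter, validFib_iff]
  | append_singleton w ab ih =>
    rw [DFA.eval_append_singleton] at h
    rcases hw : (mulDFA n c B).eval w with _ | ⟨d, d', a, b⟩
    all_goals rw [hw] at h
    · simp [mulDFA] at h
    obtain ⟨hd, hd', hlast, hx, hy⟩ := ih hw
    obtain ⟨x, y⟩ := ab
    simp only [mulDFA] at h
    split_ifs at h with hclash hbox
    cases h
    simp only at hd hd' hlast ⊢
    refine ⟨?_, ?_, ?_, ?_, ?_⟩
    · rw [fibDiff_append_singleton, hd, hd']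
    · rw [shiftedFibDiff_append_singleton, hd]
    · simp [lastLetter]
    · rw [List.map_append, List.map_singleton, validFib_append_singleton, getLast?_getD_map_fst,
        ← hlast]
      exact ⟨hx, by cases x <;> simp_all⟩
    · rw [List.map_append, List.map_singleton, validFib_append_singleton, getLast?_getD_map_snd,
        ← hlast]
      exact ⟨hy, by cases y <;> simp_all⟩

theorem mulDFA_eval_ne_none {w : List (Bool × Bool)} (hx : ValidFib (w.map Prod.fst))
    (hy : ValidFib (w.map Prod.snd))
    (hB : ∀ p, p <+: w → |fibDiff n p| ≤ B ∧ |shiftedFibDiff n p| ≤ B) :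
    (mulDFA n c B).eval w ≠ none := by
  induction w using List.reverseRecOn with
  | nil => simp [mulDFA]
  | append_singleton w ab ih =>
    obtain ⟨x, y⟩ := ab
    rw [List.map_append, List.map_singleton, validFib_append_singleton, getLast?_getD_map_fst]
      at hx
    rw [List.map_append, List.map_singleton, validFib_append_singleton, getLast?_getD_map_snd]
      at hy
    obtain ⟨q, hq⟩ := Option.ne_none_iff_exists'.1
      (ih hx.1 hy.1 fun p hp => hB p (hp.trans (List.prefix_append _ _)))
    obtain ⟨hd, hd', hlast, -, -⟩ := mulDFA_eval_eq_some hq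
    obtain ⟨hB1, hB2⟩ := hB _ (List.prefix_refl _)
    rw [fibDiff_append_singleton, ← hd, ← hd'] at hB1
    rw [shiftedFibDiff_append_singleton, ← hd] at hB2
    obtain ⟨d, d', a, b⟩ := q
    simp only at hd hd' hlast hB1 hB2
    rw [← hlast] at hx hy
    rw [DFA.eval_append_singleton, hq]
    simp only [mulDFA]
    rw [if_neg (by simp_all), dif_pos ⟨hB1, hB2⟩]
    simp

end MulDFA

theorem mem_mulDFA_accepts_iff {n : ℕ} (hn : 1 ≤ n) {c : ℤ} (hc : |c| ≤ n)
    {w : List (Bool × Bool)} :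
    w ∈ (mulDFA n c (2 * n + 1)).accepts ↔
      ValidFib (w.map Prod.fst) ∧ ValidFib (w.map Prod.snd) ∧ fibDiff n w = c := by
  rw [DFA.mem_accepts]
  constructor
  · rintro ⟨q, hq, hqc⟩
    obtain ⟨hd, -, -, hx, hy⟩ := mulDFA_eval_eq_some hq
    exact ⟨hx, hy, hd ▸ hqc⟩
  · rintro ⟨hx, hy, hw⟩
    obtain ⟨q, hq⟩ := Option.ne_none_iff_exists'.1 <| mulDFA_eval_ne_none hx hy fun p hp => by
      exact_mod_cast abs_fibDiff_le_of_isPrefix hn hc hp hx hy hw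
    exact ⟨q, hq, (mulDFA_eval_eq_some hq).1.trans hw⟩

theorem multiplication_state_complexity :
    ∃ C : ℕ, ∀ n c : ℕ, 1 ≤ n → c < n →
      ∃ (σ : Type) (_ : Fintype σ) (M : DFA (Bool × Bool) σ),
        Fintype.card σ ≤ C * n ^ 2 ∧
        ∀ w : List (Bool × Bool),
          w ∈ M.accepts ↔
            ValidFib (w.map Prod.fst) ∧ ValidFib (w.map Prod.snd) ∧
              fibVal (w.map Prod.snd) = n * fibVal (w.map Prod.fst) + c := by
  refine ⟨200, fun n c hn hc => ⟨_, inferInstance, mulDFA n c (2 * n + 1), ?_, fun w => ?_⟩⟩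
  · rw [card_mulState]
    nlinarith
  · have hc' : |(c : ℤ)| ≤ n := by rw [Nat.abs_cast]; exact_mod_cast hc.le
    rw [mem_mulDFA_accepts_iff hn hc', fibDiff, sub_eq_iff_eq_add']
    norm_cast
end

section
/- Let n ≥ 1 be an integer, let x and y be valid Fibonacci representations, and let a, b ∈ {0,1}. If [y] − n[x] ≥ 2n, then [yb] − n[xa] ≥ n. -/
/-- The numerical value of a single bit. -/
def bitVal (a : Bool) : ℤ := if a then 1 else 0

/-!
Appending a bit sends `[x]` to `[x] + s(x) + a`, where `s(x)` is the value of `x` with every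
Fibonacci weight shifted down by one index. Since `φ s(x) - [x]` always lies in `[1 - φ, 1]`,
the hypothesis `[y] ≥ n ([x] + 1)` forces `s(y) ≥ n s(x)`, and then
`[yb] - n [xa] ≥ ([y] - n [x]) - n ≥ n`.
-/

def fibShiftVal : List Bool → ℕ
  | [] => 0
  | a :: rest => (if a then Nat.fib (rest.length + 1) else 0) + fibShiftVal rest

lemma fibShiftVal_append_singleton (w : List Bool) (b : Bool) :
    fibShiftVal (w ++ [b]) = fibVal w + b.toNat := by
  induction w with
  | nil => cases b <;> rfl
  | cons a r ih => cases a <;> simp [fibShiftVal, fibVal, ih, add_assoc]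

lemma fibVal_append_singleton_s9 (w : List Bool) (b : Bool) :
    fibVal (w ++ [b]) = fibVal w + fibShiftVal w + b.toNat := by
  induction w with
  | nil => cases b <;> rfl
  | cons a r ih =>
    cases a <;> simp [fibVal, fibShiftVal, ih, Nat.fib_add_two, add_assoc, add_left_comm]

open goldenRatio in
lemma goldenRatio_mul_fibShiftVal_sub_fibVal_mem_Icc (w : List Bool) :
    φ * fibShiftVal w - fibVal w ∈ Set.Icc (1 - φ) 1 := by
  induction w using List.reverseRecOn with
  | nil => simp [fibShiftVal, fibVal, Real.one_lt_goldenRatio.le]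
  | append_singleton w b ih =>
    obtain ⟨lo, hi⟩ := ih
    have hb : (b.toNat : ℝ) ≤ 1 := by exact_mod_cast Bool.toNat_le b
    -- since `(φ - 1) φ = 1`, the map `e ↦ (φ - 1) (b - e)` sends `[1 - φ, 1]` into itself
    have step : φ * fibShiftVal (w ++ [b]) - fibVal (w ++ [b])
        = (φ - 1) * (b.toNat - (φ * fibShiftVal w - fibVal w)) := by
      rw [fibShiftVal_append_singleton, fibVal_append_singleton_s9]
      push_cast
      linear_combination (fibShiftVal w : ℝ) * Real.goldenRatio_sq
    have hφ : 0 ≤ φ - 1 := by linarith [Real.one_lt_goldenRatio]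
    rw [step]
    constructor <;> nlinarith [Real.goldenRatio_sq]

open goldenRatio in
lemma mul_fibShiftVal_le_of_mul_fibVal_add_one_le {n : ℕ} {x y : List Bool}
    (h : n * (fibVal x + 1) ≤ fibVal y) : n * fibShiftVal x ≤ fibShiftVal y := by
  by_contra! hlt
  have hlt' : (fibShiftVal y + 1 : ℝ) ≤ n * fibShiftVal x := by exact_mod_cast hlt
  have h' : (n * (fibVal x + 1) : ℝ) ≤ fibVal y := by exact_mod_cast h
  obtain ⟨-, hx⟩ := goldenRatio_mul_fibShiftVal_sub_fibVal_mem_Icc x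
  obtain ⟨hy, -⟩ := goldenRatio_mul_fibShiftVal_sub_fibVal_mem_Icc y
  have : φ * (fibShiftVal y + 1) ≤ φ * fibShiftVal y + (φ - 1) := calc
    φ * (fibShiftVal y + 1) ≤ φ * (n * fibShiftVal x) := by gcongr
    _ = n * (φ * fibShiftVal x) := by ring
    _ ≤ n * (fibVal x + 1) := by gcongr; linarith
    _ ≤ fibVal y := h'
    _ ≤ φ * fibShiftVal y + (φ - 1) := by linarith
  linarith

theorem diff_stays_high_of_ge_two_n_general (n : ℕ) (x y : List Bool)
    (a b : Bool)
    (h : (fibVal y : ℤ) - n * fibVal x ≥ 2 * n) :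
    (fibVal (y ++ [b]) : ℤ) - n * fibVal (x ++ [a]) ≥ n := by
  have hs : n * fibShiftVal x ≤ fibShiftVal y := by
    apply mul_fibShiftVal_le_of_mul_fibVal_add_one_le
    zify
    linarith
  have ha : (n : ℤ) * a.toNat ≤ n :=
    mul_le_of_le_one_right n.cast_nonneg (by exact_mod_cast Bool.toNat_le a)
  zify at hs
  rw [fibVal_append_singleton_s9, fibVal_append_singleton_s9]
  push_cast
  linarith

theorem diff_stays_high_of_ge_two_n (n : ℕ) (hn : 1 ≤ n) (x y : List Bool)
    (hx : ValidFib x) (hy : ValidFib y) (a b : Bool)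
    (h : (fibVal y : ℤ) - n * fibVal x ≥ 2 * n) :
    (fibVal (y ++ [b]) : ℤ) - n * fibVal (x ++ [a]) ≥ n :=
  diff_stays_high_of_ge_two_n_general n x y a b h
end

section
/- There is an absolute constant C with the following property. Let Δ be a finite alphabet, let m ≥ 1, and let h : ℕ → Δ be a sequence generated by a Fibonacci-DFAO with at most m states. Then for every integer c ≥ 0, the shifted sequence i ↦ h(i+c) is generated by a Fibonacci-DFAO with at most C·m²·(c+1)² states. -/
/-- A deterministic finite automaton with output (DFAO). -/
structure DFAO (α : Type*) (σ : Type*) (Δ : Type*) where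
  step : σ → α → σ
  start : σ
  out : σ → Δ

/-- The output of a DFAO on an input word. -/
def DFAO.eval {α σ Δ : Type*} (M : DFAO α σ Δ) (w : List α) : Δ :=
  M.out (w.foldl M.step M.start)

/-- `h : ℕ → Δ` is generated by a Fibonacci-DFAO with at most `m` states:
there is a DFAO with input alphabet `{0,1}` and at most `m` states whose output on
every valid Fibonacci representation `w` (leading zeros allowed) is `h [w]`. -/
def FibGeneratedBy {Δ : Type*} (h : ℕ → Δ) (m : ℕ) : Prop :=
  ∃ (σ : Type) (_ : Fintype σ) (M : DFAO Bool σ Δ),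
    Fintype.card σ ≤ m ∧ ∀ w : List Bool, ValidFib w → M.eval w = h (fibVal w)

/-!
Adding `c ≤ F_r` to a representation changes only its last `r + 1` digits, apart from a possible
carry into the prefix before them; that carry adds the weight of a single position, fixed by the
last digit of the prefix. So the shifted sequence is generated by an automaton that keeps the last
`r + 1` digits read in a window and runs `M` both on the prefix and on the prefix with the carry
added; at the end the window tells which of the two runs to continue, and on which digits. With
`r` least such that `c ≤ F_r`, the window costs `2 ^ (r + 1) = O(c²)` states, because `F_r²`
grows faster than `2 ^ r`.
-/

open List Nat

theorem validFib_iff_isChain {w : List Bool} :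
    ValidFib w ↔ w.IsChain (fun a b => a = false ∨ b = false) := Iff.rfl

theorem validFib_cons_cons {a b : Bool} {w : List Bool} :
    ValidFib (a :: b :: w) ↔ (a = false ∨ b = false) ∧ ValidFib (b :: w) :=
  isChain_cons_cons

theorem ValidFib.tail {w : List Bool} (h : ValidFib w) : ValidFib w.tail :=
  IsChain.tail h

theorem validFib_append {u v : List Bool} :
    ValidFib (u ++ v) ↔
      ValidFib u ∧ ValidFib v ∧ (u.getLastD false = false ∨ v.headD false = false) := by
  simp only [validFib_iff_isChain, isChain_append, getLastD_eq_getLast?, headD_eq_head?_getD]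
  cases u.getLast? <;> cases v.head? <;> simp

theorem validFib_false_cons {w : List Bool} (h : ValidFib w) : ValidFib (false :: w) :=
  isChain_cons.2 ⟨fun _ _ => Or.inl rfl, h⟩

theorem validFib_replicate_false_append {w : List Bool} (k : ℕ) (hw : ValidFib w) :
    ValidFib (replicate k false ++ w) := by
  induction k with
  | zero => exact hw
  | succ k ih => exact validFib_false_cons ih

theorem fibVal_cons (a : Bool) (w : List Bool) :
    fibVal (a :: w) = (if a then fib (w.length + 2) else 0) + fibVal w := rfl

theorem fibVal_replicate_false_append (k : ℕ) (w : List Bool) :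
    fibVal (replicate k false ++ w) = fibVal w := by
  induction k with
  | zero => rfl
  | succ k ih => simpa [replicate_succ, fibVal_cons] using ih

theorem fibVal_append_s12 (u v : List Bool) :
    fibVal (u ++ v) = fibVal (u ++ replicate v.length false) + fibVal v := by
  induction u with
  | nil => simpa [fibVal] using fibVal_replicate_false_append v.length []
  | cons a u ih => simp only [cons_append, fibVal_cons, length_append, length_replicate, ih]; omega

theorem fibVal_append_cons_replicate (u : List Bool) (a : Bool) (j : ℕ) :
    fibVal (u ++ a :: replicate j false) =
      fibVal (u ++ replicate (j + 1) false) + if a then fib (j + 2) else 0 := by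
  rw [fibVal_append_s12, fibVal_cons]
  simpa [fibVal] using fibVal_replicate_false_append j []

theorem fibVal_lt_fib_length_add_two :
    ∀ {w : List Bool}, ValidFib w → fibVal w < fib (w.length + 2)
  | [], _ => by simp [fibVal]
  | false :: w, h => by
    rw [fibVal_cons, if_neg Bool.false_ne_true, zero_add]
    exact (fibVal_lt_fib_length_add_two h.tail).trans_le (fib_mono (by simp))
  | [true], _ => by simp [fibVal, fib_add_two]
  | true :: true :: _, h => by simp [validFib_cons_cons] at h
  | true :: false :: w, h => by
    have hw := fibVal_lt_fib_length_add_two h.tail.tail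
    simp only [fibVal_cons, if_true, if_neg Bool.false_ne_true, zero_add, length_cons]
    have := fib_add_two (n := w.length + 2)
    grind

theorem fibVal_lt_fib_length_add_one {w : List Bool} (h : ValidFib w)
    (h₀ : w.headD false = false) : fibVal w < fib (w.length + 1) := by
  match w, h₀ with
  | [], _ => simp [fibVal]
  | false :: w, _ => simpa [fibVal_cons] using fibVal_lt_fib_length_add_two h.tail

def fibDigits : ℕ → ℕ → List Bool
  | 0, _ => []
  | L + 1, n =>
    if fib (L + 2) ≤ n then true :: fibDigits L (n - fib (L + 2)) else false :: fibDigits L n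

theorem length_fibDigits (L n : ℕ) : (fibDigits L n).length = L := by
  induction L generalizing n with
  | zero => rfl
  | succ L ih => unfold fibDigits; split <;> simp [ih]

theorem headD_fibDigits {L n : ℕ} (h : n < fib (L + 1)) :
    (fibDigits L n).headD false = false := by
  cases L with
  | zero => rfl
  | succ L => simp [fibDigits, not_le.2 h]

theorem validFib_fibDigits_and_fibVal {L n : ℕ} (h : n < fib (L + 2)) :
    ValidFib (fibDigits L n) ∧ fibVal (fibDigits L n) = n := by
  induction L generalizing n with
  | zero => simp_all [fibDigits, fibVal, validFib_iff_isChain]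
  | succ L ih =>
    have hfib := fib_add_two (n := L + 1)
    unfold fibDigits
    split_ifs with hn
    · have hlt : n - fib (L + 2) < fib (L + 1) := by grind
      obtain ⟨hv, hval⟩ := ih (hlt.trans_le (fib_mono (by omega)))
      refine ⟨validFib_append.2 ⟨isChain_singleton _, hv, Or.inr (headD_fibDigits hlt)⟩, ?_⟩
      rw [fibVal_cons, length_fibDigits, hval]
      grind
    · obtain ⟨hv, hval⟩ := ih (not_le.1 hn)
      exact ⟨validFib_false_cons hv, by rw [fibVal_cons, hval]; simp⟩

theorem two_pow_succ_le_four_mul_fib_succ_sq (n : ℕ) : 2 ^ (n + 1) ≤ 4 * fib (n + 1) ^ 2 := by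
  induction n using Nat.twoStepInduction with
  | zero => decide
  | one => decide
  | more n ih _ =>
    have h2 : 2 * fib (n + 1) ≤ fib (n + 1 + 2) := by
      rw [fib_add_two]
      have := fib_mono (show n + 1 ≤ n + 1 + 1 by omega)
      omega
    calc 2 ^ (n + 2 + 1) = 4 * 2 ^ (n + 1) := by ring
      _ ≤ 4 * (2 * fib (n + 1)) ^ 2 := by nlinarith
      _ ≤ 4 * fib (n + 2 + 1) ^ 2 := by gcongr

theorem exists_le_fib_and_two_pow_le (c : ℕ) :
    ∃ r, c ≤ fib r ∧ 2 ^ r ≤ 8 * (c + 1) ^ 2 := by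
  have hex : ∃ r, c ≤ fib r :=
    ⟨c + 5, (Nat.le_add_right c 5).trans (le_fib_self (by omega))⟩
  obtain ⟨r, hcr, hmin⟩ : ∃ r, c ≤ fib r ∧ ∀ s < r, fib s < c :=
    ⟨Nat.find hex, Nat.find_spec hex, fun s hs => not_le.1 (Nat.find_min hex hs)⟩
  refine ⟨r, hcr, ?_⟩
  rcases r with _ | _ | s
  · nlinarith
  · rw [zero_add, pow_one]; nlinarith
  · have hs := hmin (s + 1) (by omega)
    calc 2 ^ (s + 2) = 2 * 2 ^ (s + 1) := by ring
      _ ≤ 2 * (4 * fib (s + 1) ^ 2) := by gcongr; exact two_pow_succ_le_four_mul_fib_succ_sq s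
      _ ≤ 8 * (c + 1) ^ 2 := by nlinarith

/-- `u` is a valid word exceeding `ph` by the weight of the last digit of `ph` (of the digit after
it, if that digit is `1`), however many zeros are appended to both. -/
def IsCarryWord (ph u : List Bool) : Prop :=
  ValidFib u ∧ ∀ j, fibVal (u ++ replicate j false) =
    fibVal (ph ++ replicate j false) + fib (j + if ph.getLastD false then 1 else 2)

theorem isCarryWord_nil : IsCarryWord [] [true] :=
  ⟨isChain_singleton _, fun j => by simp [fibVal_cons, add_comm]⟩

theorem IsCarryWord.snoc {ph u : List Bool} {a : Bool} (hc : IsCarryWord ph u)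
    (hv : ValidFib (ph ++ [a])) :
    IsCarryWord (ph ++ [a]) (if a || ph.getLastD false then u ++ [false] else ph ++ [true]) := by
  obtain ⟨hu, hval⟩ := hc
  obtain ⟨hph, -, hjunc⟩ := validFib_append.1 hv
  refine ⟨?_, fun j => ?_⟩
  · split
    · exact validFib_append.2 ⟨hu, isChain_singleton _, Or.inr rfl⟩
    · exact validFib_append.2 ⟨hph, isChain_singleton _, by simp_all⟩
  · have hu := hval (j + 1)
    have hfib : fib (j + 1 + 2) = fib (j + 1) + fib (j + 2) := fib_add_two
    cases a <;> cases hl : ph.getLastD false <;>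
      simp only [hl, Bool.or_false, Bool.or_true, if_true, Bool.false_eq_true, if_false,
        append_assoc, singleton_append, fibVal_append_cons_replicate, getLastD_concat]
        at hu hjunc ⊢
    all_goals grind

/-- The state after reading `ph ++ b` with `|b| = r + 1`: the states of `M` after `ph` and after
a carry word of `ph`, the last digit of `ph`, and the window `b`. -/
abbrev ShiftState (σ : Type*) (r : ℕ) : Type _ := σ × σ × Bool × List.Vector Bool (r + 1)

theorem card_shiftState (σ : Type*) [Fintype σ] (r : ℕ) :
    Fintype.card (ShiftState σ r) = Fintype.card σ ^ 2 * (4 * 2 ^ r) := by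
  simp only [Fintype.card_prod, Fintype.card_bool, card_vector]
  ring

namespace DFAO

variable {α σ Δ : Type*}

theorem eval_append (M : DFAO α σ Δ) (u v : List α) :
    M.eval (u ++ v) = M.out (v.foldl M.step (u.foldl M.step M.start)) := by
  rw [eval, foldl_append]

def GeneratesFib (M : DFAO Bool σ Δ) (h : ℕ → Δ) : Prop :=
  ∀ w, ValidFib w → M.eval w = h (fibVal w)

theorem GeneratesFib.out_foldl_fibDigits {M : DFAO Bool σ Δ} {h : ℕ → Δ}
    (hM : M.GeneratesFib h) {u : List Bool} {L n : ℕ} (hu : ValidFib u) (hn : n < fib (L + 2))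
    (hjunc : u.getLastD false = false ∨ n < fib (L + 1)) :
    M.out ((fibDigits L n).foldl M.step (u.foldl M.step M.start)) =
      h (fibVal (u ++ replicate L false) + n) := by
  obtain ⟨hv, hval⟩ := validFib_fibDigits_and_fibVal hn
  have hvalid : ValidFib (u ++ fibDigits L n) :=
    validFib_append.2 ⟨hu, hv, hjunc.imp_right headD_fibDigits⟩
  rw [← eval_append, hM _ hvalid, fibVal_append_s12, length_fibDigits, hval]

variable (M : DFAO Bool σ Δ) (r c : ℕ)

def shiftStep : ShiftState σ r → Bool → ShiftState σ r
  | (q₀, q₁, l, b), a =>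
    (M.step q₀ b.head, if b.head || l then M.step q₁ false else M.step q₀ true, b.head,
      ⟨b.toList.tail ++ [a], by simp⟩)

/-- `g` is the least value that the window digits cannot reach after the prefix (and the weight of
the carry position); from `g` on, `g` is carried into the prefix and the run on the carry word
continues. -/
def shiftOut : ShiftState σ r → Δ
  | (q₀, q₁, l, b) =>
    let s := fibVal b.toList + c
    let g := fib (r + 1 + if l then 1 else 2)
    if s < g then M.out ((fibDigits (r + 1) s).foldl M.step q₀)
    else M.out ((fibDigits (r + 1) (s - g)).foldl M.step q₁)

/-- The state after `r + 1` leading zeros, so that the window is always full. -/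
def shiftStart : ShiftState σ r :=
  (M.start, M.step M.start true, false, List.Vector.replicate (r + 1) false)

def shift : DFAO Bool (ShiftState σ r) Δ :=
  ⟨M.shiftStep r, M.shiftStart r, M.shiftOut r c⟩

def IsShiftStateOf (x : List Bool) (s : ShiftState σ r) : Prop :=
  ∃ ph u b, ∃ hb : b.length = r + 1, x = ph ++ b ∧ IsCarryWord ph u ∧
    s = (ph.foldl M.step M.start, u.foldl M.step M.start, ph.getLastD false, ⟨b, hb⟩)

variable {M r c}

theorem isShiftStateOf_start :
    M.IsShiftStateOf r (replicate (r + 1) false) (M.shiftStart r) :=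
  ⟨[], [true], _, length_replicate, rfl, isCarryWord_nil, rfl⟩

theorem IsShiftStateOf.step {x : List Bool} {s : ShiftState σ r} (hs : M.IsShiftStateOf r x s)
    {a : Bool} (hx : ValidFib (x ++ [a])) :
    M.IsShiftStateOf r (x ++ [a]) (M.shiftStep r s a) := by
  obtain ⟨ph, u, _ | ⟨b₀, t⟩, hb, rfl, hc, rfl⟩ := hs
  · simp at hb
  have hsplit : ph ++ b₀ :: t ++ [a] = (ph ++ [b₀]) ++ (t ++ [a]) := by simp
  refine ⟨ph ++ [b₀], _, t ++ [a], by simpa using hb, hsplit,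
    hc.snoc (validFib_append.1 (hsplit ▸ hx)).1, ?_⟩
  simp only [shiftStep, List.Vector.head, getLastD_concat, apply_ite (foldl M.step M.start),
    foldl_append, foldl_cons, foldl_nil]
  rfl

theorem isShiftStateOf_run {w : List Bool} (hw : ValidFib w) :
    M.IsShiftStateOf r (replicate (r + 1) false ++ w)
      (w.foldl (M.shiftStep r) (M.shiftStart r)) := by
  induction w using reverseRecOn with
  | nil => rw [append_nil]; exact isShiftStateOf_start
  | append_singleton w a ih =>
    rw [foldl_append, foldl_cons, foldl_nil, ← append_assoc]
    refine (ih (validFib_append.1 hw).1).step ?_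
    rw [append_assoc]
    exact validFib_replicate_false_append _ hw

theorem IsShiftStateOf.shiftOut_eq {h : ℕ → Δ} (hM : M.GeneratesFib h) (hc : c ≤ fib r)
    {x : List Bool} {s : ShiftState σ r} (hs : M.IsShiftStateOf r x s) (hx : ValidFib x) :
    M.shiftOut r c s = h (fibVal x + c) := by
  obtain ⟨ph, u, b, hb, rfl, ⟨hu, hcarry⟩, rfl⟩ := hs
  obtain ⟨hph, hbv, hjunc⟩ := validFib_append.1 hx
  have hsplit : fibVal (ph ++ b) = fibVal (ph ++ replicate (r + 1) false) + fibVal b := by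
    rw [fibVal_append_s12, hb]
  have hfib₃ : fib (r + 1 + 2) = fib (r + 1) + fib (r + 1 + 1) := fib_add_two
  have hfib₂ : fib r ≤ fib (r + 1 + 1) := fib_mono (by omega)
  have hcarry := hcarry (r + 1)
  simp only [shiftOut, List.Vector.toList_mk]
  cases hl : ph.getLastD false
  · have hbg := fibVal_lt_fib_length_add_two hbv
    rw [hb] at hbg
    simp only [hl, if_false, Bool.false_eq_true] at hcarry ⊢
    split_ifs with hsg
    · rw [hM.out_foldl_fibDigits hph hsg (Or.inl hl), hsplit, add_assoc]
    · rw [hM.out_foldl_fibDigits hu (by omega) (Or.inr (by omega)), hcarry, hsplit]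
      congr 1
      omega
  · have hbg := fibVal_lt_fib_length_add_one hbv (hjunc.resolve_left (by rw [hl]; decide))
    rw [hb] at hbg
    simp only [hl, if_true] at hcarry ⊢
    split_ifs with hsg
    · rw [hM.out_foldl_fibDigits hph (by omega) (Or.inr hsg), hsplit, add_assoc]
    · rw [hM.out_foldl_fibDigits hu (by omega) (Or.inr (by omega)), hcarry, hsplit]
      congr 1
      omega

theorem GeneratesFib.shift {h : ℕ → Δ} (hM : M.GeneratesFib h) (hc : c ≤ fib r) :
    (M.shift r c).GeneratesFib (fun i => h (i + c)) := fun w hw => by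
  have := (isShiftStateOf_run hw).shiftOut_eq hM hc (validFib_replicate_false_append _ hw)
  rwa [fibVal_replicate_false_append] at this

end DFAO

theorem shift_state_complexity :
    ∃ C : ℕ, ∀ (Δ : Type) (_ : Fintype Δ) (m : ℕ), 1 ≤ m →
      ∀ h : ℕ → Δ, FibGeneratedBy h m →
        ∀ c : ℕ, FibGeneratedBy (fun i => h (i + c)) (C * m ^ 2 * (c + 1) ^ 2) := by
  refine ⟨32, fun Δ _ m _ h ⟨σ, _, M, hcard, hM⟩ c => ?_⟩
  obtain ⟨r, hcr, hr⟩ := exists_le_fib_and_two_pow_le c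
  refine ⟨ShiftState σ r, inferInstance, M.shift r c, ?_, DFAO.GeneratesFib.shift hM hcr⟩
  calc Fintype.card (ShiftState σ r) = Fintype.card σ ^ 2 * (4 * 2 ^ r) := card_shiftState σ r
    _ ≤ m ^ 2 * (4 * (8 * (c + 1) ^ 2)) := by gcongr
    _ = 32 * m ^ 2 * (c + 1) ^ 2 := by ring
end
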